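/- arXiv:2510.20802 — 2 statements merged into one kernel-verified Lean document; each statement's English description precedes it below -/
import Mathlib

section
/- A monochromatic path graph on n vertices takes exactly ⌊(n−1)/2⌋ iterations of Colour Refinement to stabilise. -/
variable {V : Type*}

/-- Colour Refinement equivalence: `crRel G i u v` means `u` and `v` get the same colour
after `i` iterations of Colour Refinement on `G` (starting monochromatic). -/
def crRel (G : SimpleGraph V) : ℕ → V → V → Prop
  | 0 => fun _ _ => True
  | (i+1) => fun u v => crRel G i u v ∧ ∀ w : V,
      Nat.card {x : V // G.Adj u x ∧ crRel G i x w} =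
      Nat.card {x : V // G.Adj v x ∧ crRel G i x w}

/-- The colour class of `v` after `i` iterations. -/
def crClass (G : SimpleGraph V) (i : ℕ) (v : V) : Set V :=
  {u : V | crRel G i u v}

/-- The partition `π^i` induced by the colouring after `i` iterations. -/
def crPartition (G : SimpleGraph V) (i : ℕ) : Set (Set V) :=
  {C : Set V | ∃ v : V, C = crClass G i v}

/-- `G` is a long-refinement graph: Colour Refinement takes exactly `n - 1` iterations
to stabilise. -/
def IsLongRefinement [Fintype V] (G : SimpleGraph V) : Prop :=
  (∀ i < Fintype.card V - 1, crPartition G (i+1) ≠ crPartition G i) ∧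
  crPartition G (Fintype.card V) = crPartition G (Fintype.card V - 1)

/-- The degree of a vertex. -/
noncomputable def vdeg (G : SimpleGraph V) (v : V) : ℕ :=
  Nat.card {u : V // G.Adj v u}

/-- `degOn G C C' k` : every vertex of `C` has exactly `k` neighbours in `C'`,
i.e. `deg_{C'}(C) = k`. -/
def degOn (G : SimpleGraph V) (C C' : Set V) (k : ℕ) : Prop :=
  ∀ v ∈ C, Nat.card {x : V // x ∈ C' ∧ G.Adj v x} = k

/-- `C` is balanced with respect to `C'`: `deg_{C'}(C)` is defined. -/
def BalancedWrt (G : SimpleGraph V) (C C' : Set V) : Prop :=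
  ∃ k, degOn G C C' k

/-! After `i` rounds of Colour Refinement on the path, two vertices have the same colour iff
their distances to the nearer end, truncated at `i`, agree. Inductively: a vertex of depth `> i`
has two neighbours of depth `≥ i`, while a non-central vertex of depth exactly `i` has only one
(its other neighbour is nearer the end, or missing if `i = 0`); vertices of equal depth are
swapped by the reversal of the path. All depths are at most `⌊(n-1)/2⌋`, so the partition is
stable from then on, and before that round `j + 1` separates the vertices `j` and `j + 1`. -/

section ColourRefinement

variable (G : SimpleGraph V)

theorem crRel_equivalence : ∀ i, Equivalence (crRel G i)
  | 0 => ⟨fun _ => trivial, fun _ => trivial, fun _ _ => trivial⟩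
  | i + 1 =>
    have h := crRel_equivalence i
    ⟨fun _ => ⟨h.refl _, fun _ => rfl⟩,
      fun ⟨huv, hc⟩ => ⟨h.symm huv, fun w => (hc w).symm⟩,
      fun ⟨huv, hc⟩ ⟨hvw, hc'⟩ => ⟨h.trans huv hvw, fun w => (hc w).trans (hc' w)⟩⟩

theorem crPartition_succ_eq_iff (i : ℕ) :
    crPartition G (i + 1) = crPartition G i ↔ ∀ u v, crRel G i u v → crRel G (i + 1) u v := by
  constructor
  · intro h u v huv
    obtain ⟨w, hw⟩ : crClass G (i + 1) v ∈ crPartition G i := h ▸ ⟨v, rfl⟩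
    have hvw : v ∈ crClass G i w := hw ▸ (crRel_equivalence G (i + 1)).refl v
    change u ∈ crClass G (i + 1) v
    exact hw ▸ (crRel_equivalence G i).trans huv hvw
  · intro h
    have hcl : ∀ v, crClass G (i + 1) v = crClass G i v :=
      fun v => Set.ext fun u => ⟨And.left, h u v⟩
    simp only [crPartition, hcl]

end ColourRefinement

namespace SimpleGraph

theorem Iso.card_adj_and {V W : Type*} {G : SimpleGraph V} {H : SimpleGraph W} (φ : G ≃g H)
    (u : V) (P : W → Prop) :
    Nat.card {x // H.Adj (φ u) x ∧ P x} = Nat.card {x // G.Adj u x ∧ P (φ x)} :=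
  Nat.card_congr (Equiv.subtypeEquiv φ.toEquiv fun _ => and_congr_left' φ.map_adj_iff.symm).symm

variable {n : ℕ}

def pathGraph.revIso (n : ℕ) : pathGraph n ≃g pathGraph n where
  toEquiv := Fin.revPerm
  map_rel_iff' := by
    intro u v
    simp only [Fin.revPerm_apply, pathGraph_adj, Fin.val_rev]
    omega

@[simp]
theorem pathGraph.revIso_apply (x : Fin n) : pathGraph.revIso n x = x.rev := rfl

def pathDepth (x : Fin n) : ℕ := min x.val x.rev.val

theorem pathDepth_eq (x : Fin n) : pathDepth x = min x.val (n - 1 - x.val) := by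
  simp only [pathDepth, Fin.val_rev]; omega

@[simp]
theorem pathDepth_rev (x : Fin n) : pathDepth x.rev = pathDepth x := by
  simp only [pathDepth, Fin.rev_rev, min_comm]

theorem pathDepth_le (x : Fin n) : pathDepth x ≤ (n - 1) / 2 := by
  have := x.isLt; rw [pathDepth_eq]; omega

theorem eq_or_eq_rev_of_pathDepth_eq {u v : Fin n} (h : pathDepth u = pathDepth v) :
    v = u ∨ v = u.rev := by
  rw [pathDepth_eq, pathDepth_eq] at h
  have := u.isLt; have := v.isLt
  rw [Fin.ext_iff, Fin.ext_iff, Fin.val_rev]; omega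

theorem pathDepth_le_pathDepth_add_one_of_adj {u x : Fin n} (h : (pathGraph n).Adj u x) :
    pathDepth u ≤ pathDepth x + 1 := by
  rw [pathGraph_adj] at h; rw [pathDepth_eq, pathDepth_eq]; omega

theorem card_pathGraph_adj_eq_two {u : Fin n} (hu : 1 ≤ pathDepth u) :
    Nat.card {x // (pathGraph n).Adj u x} = 2 := by
  rw [pathDepth_eq] at hu
  rw [Nat.card_eq_two_iff' ⟨⟨u - 1, by omega⟩, by simp [pathGraph_adj]; omega⟩]
  refine ⟨⟨⟨u + 1, by omega⟩, by simp [pathGraph_adj]⟩, by simp; omega, ?_⟩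
  rintro ⟨x, hx⟩ hne
  rw [pathGraph_adj] at hx
  simp only [ne_eq, Subtype.mk.injEq, Fin.ext_iff] at hne ⊢
  omega

theorem card_adj_and_min_pathDepth_eq_of_lt {i : ℕ} {u : Fin n} (hu : i < pathDepth u) (c : ℕ) :
    Nat.card {x // (pathGraph n).Adj u x ∧ min (pathDepth x) i = c} = if i = c then 2 else 0 := by
  have hnbr (x) (hx : (pathGraph n).Adj u x) : min (pathDepth x) i = i := by
    have := pathDepth_le_pathDepth_add_one_of_adj hx; omega
  split_ifs with hc
  · subst hc
    rw [← card_pathGraph_adj_eq_two (by omega : 1 ≤ pathDepth u)]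
    exact Nat.card_congr (Equiv.subtypeEquivRight fun x => and_iff_left_of_imp (hnbr x))
  · have : IsEmpty {x // (pathGraph n).Adj u x ∧ min (pathDepth x) i = c} :=
      ⟨fun ⟨x, hx, hxc⟩ => hc ((hnbr x hx).symm.trans hxc)⟩
    exact Nat.card_of_isEmpty

theorem card_adj_and_min_pathDepth_eq_of_pathDepth_eq {i : ℕ} {u : Fin n} (hu : pathDepth u = i)
    (hn : 2 * i + 3 ≤ n) :
    Nat.card {x // (pathGraph n).Adj u x ∧ min (pathDepth x) i = i} = 1 := by
  wlog hui : u.val = i generalizing u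
  · have hrev : u.rev.val = i := by
      rw [pathDepth_eq] at hu; rw [Fin.val_rev]; omega
    rw [← Fin.rev_rev u, ← pathGraph.revIso_apply, Iso.card_adj_and]
    simpa using this (by simpa using hu) hrev
  rw [Nat.card_eq_one_iff_exists]
  refine ⟨⟨⟨i + 1, by omega⟩, by simp [pathGraph_adj, hui], by simp only [pathDepth_eq]; omega⟩, ?_⟩
  rintro ⟨x, hx, hxi⟩
  rw [pathGraph_adj] at hx
  rw [pathDepth_eq] at hxi
  ext
  simp only
  omega

theorem crRel_pathGraph_iff (i : ℕ) (u v : Fin n) :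
    crRel (pathGraph n) i u v ↔ min (pathDepth u) i = min (pathDepth v) i := by
  induction i generalizing u v with
  | zero => simp [crRel]
  | succ i ih =>
    simp only [crRel, ih]
    constructor
    · rintro ⟨hi, hcard⟩
      have hsep (a b : Fin n) (ha : pathDepth a = i) (hb : i < pathDepth b) :
          Nat.card {x // (pathGraph n).Adj a x ∧ min (pathDepth x) i = min (pathDepth a) i} ≠
            Nat.card {x // (pathGraph n).Adj b x ∧ min (pathDepth x) i = min (pathDepth a) i} := by
        have := pathDepth_le b
        rw [ha, min_self, card_adj_and_min_pathDepth_eq_of_pathDepth_eq ha (by omega),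
          card_adj_and_min_pathDepth_eq_of_lt hb]
        simp
      by_contra hne
      rcases (by omega : pathDepth u = i ∧ i < pathDepth v ∨
          pathDepth v = i ∧ i < pathDepth u) with ⟨hu, hv⟩ | ⟨hv, hu⟩
      · exact hsep u v hu hv (hcard u)
      · exact hsep v u hv hu (hcard v).symm
    · intro h
      refine ⟨by omega, fun w => ?_⟩
      by_cases hu : i < pathDepth u
      · rw [card_adj_and_min_pathDepth_eq_of_lt hu, card_adj_and_min_pathDepth_eq_of_lt (by omega)]
      · obtain rfl | rfl := eq_or_eq_rev_of_pathDepth_eq (show pathDepth u = pathDepth v by omega)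
        · rfl
        · rw [← pathGraph.revIso_apply, Iso.card_adj_and]
          simp only [pathGraph.revIso_apply, pathDepth_rev]

end SimpleGraph

/-- A monochromatic path on `n` vertices takes exactly `⌊(n-1)/2⌋` iterations of
Colour Refinement to stabilise. -/
theorem pathGraph_stabilisation (n : ℕ) :
    crPartition (SimpleGraph.pathGraph n) ((n-1)/2 + 1) =
        crPartition (SimpleGraph.pathGraph n) ((n-1)/2) ∧
      ∀ j < (n-1)/2, crPartition (SimpleGraph.pathGraph n) (j+1) ≠
        crPartition (SimpleGraph.pathGraph n) j := by
  refine ⟨(crPartition_succ_eq_iff _ _).2 fun u v huv => ?_, fun j hj hstab => ?_⟩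
  · have := SimpleGraph.pathDepth_le u
    have := SimpleGraph.pathDepth_le v
    rw [SimpleGraph.crRel_pathGraph_iff] at huv ⊢
    omega
  · have hsplit := (crPartition_succ_eq_iff _ _).1 hstab ⟨j, by omega⟩ ⟨j + 1, by omega⟩
    simp only [SimpleGraph.crRel_pathGraph_iff, SimpleGraph.pathDepth_eq] at hsplit
    omega
end

section
/- Let G be a long-refinement graph, p the minimal iteration in which all classes of π^p have size at most 2, and P_1 ≺ P_2 ≺ ... ≺ P_m the pairs of π^p ordered by the iteration in which they split into singletons. Then for all i ∈ [1, m−1], the bipartite graph between consecutive pairs P_i and P_{i+1} is a perfect matching: deg_{P_i}(P_{i+1}) = deg_{P_{i+1}}(P_i) = 1. -/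
variable {V : Type*}

/-!
In a long-refinement graph on `n` vertices each of the first `n - 1` rounds of Colour Refinement
adds at least one class, and there are never more than `n` classes; hence `π^i` has exactly
`min (i + 1) n` classes, and since a round in which two classes split would add two, at most one
class splits in each round.

Let `Q = {u, d}` split in round `j + 2`. Some class of `π^(j+1)` separates `u` from `d`; since `u`
and `d` already agreed in round `j + 1`, that class is a piece of a class of `π^j` that splits in
round `j + 1`, i.e. of `P`, so it is a singleton `{w}` with `P = {w, b}`. Thus exactly one of
`u, d` is adjacent to `w`, while `u` and `d` have equally many neighbours in `P`; among the four
possible edges between `P` and `Q` this leaves only the two perfect matchings.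
-/

open Finset

theorem card_image_add_card_le_card {α β : Type*} [DecidableEq β] (f : α → β)
    {t : Finset α} {s : Finset β}
    (hs : ∀ y ∈ s, ∃ x₁ ∈ t, ∃ x₂ ∈ t, x₁ ≠ x₂ ∧ f x₁ = y ∧ f x₂ = y) :
    #(t.image f) + #s ≤ #t := by
  have hsub : s ⊆ t.image f := fun y hy => by
    obtain ⟨x, hx, -, -, -, rfl, -⟩ := hs y hy
    exact mem_image_of_mem f hx
  have hfibre : ∀ y ∈ t.image f, 1 + (if y ∈ s then 1 else 0) ≤ #{x ∈ t | f x = y} := by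
    intro y hy
    split_ifs with hys
    · obtain ⟨x₁, h₁, x₂, h₂, hne, rfl, he⟩ := hs y hys
      exact one_lt_card.2 ⟨x₁, by simp [h₁], x₂, by simp [h₂, he], hne⟩
    · obtain ⟨x, hx, rfl⟩ := mem_image.1 hy
      exact card_pos.2 ⟨x, by simp [hx]⟩
  calc #(t.image f) + #s = ∑ y ∈ t.image f, (1 + if y ∈ s then 1 else 0) := by
        rw [sum_add_distrib, sum_boole, filter_mem_eq_inter, inter_eq_right.2 hsub]
        simp
    _ ≤ ∑ y ∈ t.image f, #{x ∈ t | f x = y} := sum_le_sum hfibre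
    _ = #t := (card_eq_sum_card_image f t).symm

theorem eq_min_succ_of_lt_succ {c : ℕ → ℕ} {n : ℕ} (h0 : 0 < c 0)
    (hmono : ∀ k, c k ≤ c (k + 1))
    (hlt : ∀ k, k + 1 < n → c k < c (k + 1)) (hle : ∀ k, c k ≤ n) (k : ℕ) :
    c k = min (k + 1) n := by
  have hlower : ∀ k, min (k + 1) n ≤ c k := by
    intro k
    induction k with
    | zero => omega
    | succ k ih =>
      by_cases hk : k + 1 < n
      · have := hlt k hk; omega
      · have := hmono k; omega
  have hupper : ∀ d k, k + d + 1 = n → c k + d ≤ n := by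
    intro d
    induction d with
    | zero => intro k _; exact hle k
    | succ d ih =>
      intro k hk
      have := ih (k + 1) (by omega)
      have := hlt k (by omega)
      omega
  have := hlower k
  have := hle k
  by_cases hk : k + 1 ≤ n
  · have := hupper (n - 1 - k) k (by omega); omega
  · omega

noncomputable def nbrCount (G : SimpleGraph V) (C : Set V) (v : V) : ℕ :=
  Nat.card {x : V // x ∈ C ∧ G.Adj v x}

section NbrCount

variable {G : SimpleGraph V}

theorem nbrCount_eq_ncard (C : Set V) (v : V) : nbrCount G C v = (C ∩ G.neighborSet v).ncard :=
  Nat.card_coe_set_eq _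

variable [DecidableRel G.Adj]

theorem nbrCount_singleton (a v : V) : nbrCount G {a} v = if G.Adj v a then 1 else 0 := by
  rw [nbrCount_eq_ncard]
  split_ifs with h
  · rw [Set.singleton_inter_of_mem (G.mem_neighborSet v a |>.2 h), Set.ncard_singleton]
  · rw [Set.singleton_inter_of_notMem (by simpa using h), Set.ncard_empty]

theorem nbrCount_pair {a b : V} (hab : a ≠ b) (v : V) :
    nbrCount G {a, b} v = (if G.Adj v a then 1 else 0) + (if G.Adj v b then 1 else 0) := by
  have hdisj : Disjoint ({a} ∩ G.neighborSet v) ({b} ∩ G.neighborSet v) :=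
    (Set.disjoint_singleton.2 hab).mono Set.inter_subset_left Set.inter_subset_left
  rw [nbrCount_eq_ncard, Set.insert_eq, Set.union_inter_distrib_right, Set.ncard_union_eq hdisj,
    ← nbrCount_eq_ncard, ← nbrCount_eq_ncard, nbrCount_singleton, nbrCount_singleton]

end NbrCount

theorem degOn_iff_nbrCount {G : SimpleGraph V} {C C' : Set V} {k : ℕ} :
    degOn G C C' k ↔ ∀ v ∈ C, nbrCount G C' v = k := Iff.rfl

theorem degOn_pair_pair_eq_one {G : SimpleGraph V} {a b u d : V} (hab : a ≠ b) (hud : u ≠ d)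
    (hpair : nbrCount G {a, b} u = nbrCount G {a, b} d)
    (hsingle : nbrCount G {a} u ≠ nbrCount G {a} d) :
    degOn G {u, d} {a, b} 1 ∧ degOn G {a, b} {u, d} 1 := by
  classical
  rw [nbrCount_pair hab, nbrCount_pair hab] at hpair
  rw [nbrCount_singleton, nbrCount_singleton] at hsingle
  simp only [degOn_iff_nbrCount, Set.forall_mem_insert, Set.mem_singleton_iff, forall_eq,
    nbrCount_pair hab, nbrCount_pair hud, G.adj_comm a, G.adj_comm b]
  split_ifs at hpair hsingle ⊢ <;> omega

section ColourRefinement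

variable {G : SimpleGraph V} {i : ℕ} {u v w : V}

theorem crRel_refl (G : SimpleGraph V) (i : ℕ) (v : V) : crRel G i v v := by
  induction i with
  | zero => trivial
  | succ i ih => exact ⟨ih, fun _ => rfl⟩

theorem crRel_symm (h : crRel G i u v) : crRel G i v u := by
  induction i with
  | zero => trivial
  | succ i ih => exact ⟨ih h.1, fun w => (h.2 w).symm⟩

theorem crRel_trans (h : crRel G i u v) (h' : crRel G i v w) : crRel G i u w := by
  induction i with
  | zero => trivial
  | succ i ih => exact ⟨ih h.1 h'.1, fun x => (h.2 x).trans (h'.2 x)⟩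

theorem crRel_mono {k : ℕ} (hik : i ≤ k) (h : crRel G k u v) : crRel G i u v := by
  induction k, hik using Nat.le_induction with
  | base => exact h
  | succ k _ ih => exact ih h.1

theorem crRel_succ_iff :
    crRel G (i + 1) u v ↔
      crRel G i u v ∧ ∀ w, nbrCount G (crClass G i w) u = nbrCount G (crClass G i w) v := by
  have hcount : ∀ u w,
      Nat.card {x // G.Adj u x ∧ crRel G i x w} = nbrCount G (crClass G i w) u :=
    fun _ _ => Nat.card_congr (Equiv.subtypeEquivRight fun _ => and_comm)
  simp only [crRel, hcount]

theorem mem_crClass_self (G : SimpleGraph V) (i : ℕ) (v : V) : v ∈ crClass G i v :=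
  crRel_refl G i v

theorem crClass_eq_of_crRel (h : crRel G i u v) : crClass G i u = crClass G i v :=
  Set.ext fun _ => ⟨fun hx => crRel_trans hx h, fun hx => crRel_trans hx (crRel_symm h)⟩

theorem crClass_mono {k : ℕ} (hik : i ≤ k) (v : V) : crClass G k v ⊆ crClass G i v :=
  fun _ => crRel_mono hik

theorem crClass_succ_eq_of_mem (h : crClass G i w ∈ crPartition G (i + 1)) :
    crClass G (i + 1) w = crClass G i w := by
  obtain ⟨u, hu⟩ := h
  have hwu : w ∈ crClass G (i + 1) u := hu ▸ mem_crClass_self G i w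
  rw [crClass_eq_of_crRel hwu, hu]

theorem exists_not_crRel_succ (h : crClass G i v ∉ crPartition G (i + 1)) :
    ∃ u ∈ crClass G i v, ¬ crRel G (i + 1) u v := by
  by_contra! hall
  exact h ⟨v, (Set.Subset.antisymm (crClass_mono i.le_succ v) hall).symm⟩

theorem crClass_eq_pair [Finite V] (h2 : (crClass G i v).ncard ≤ 2) (hu : u ∈ crClass G i v)
    (huv : u ≠ v) :
    crClass G i v = {v, u} :=
  (Set.eq_of_subset_of_ncard_le (Set.insert_subset (mem_crClass_self G i v)
    (Set.singleton_subset_iff.2 hu)) (by rwa [Set.ncard_pair huv.symm]) (Set.toFinite _)).symm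

theorem exists_crClass_eq_pair_of_split [Finite V] (h2 : (crClass G i v).ncard ≤ 2)
    (hsplit : crClass G i v ∉ crPartition G (i + 1)) :
    ∃ u, u ≠ v ∧ crClass G i v = {v, u} ∧ crClass G (i + 1) v = {v} := by
  obtain ⟨u, hu, hsep⟩ := exists_not_crRel_succ hsplit
  have huv : u ≠ v := fun h => hsep (h ▸ crRel_refl G (i + 1) u)
  refine ⟨u, huv, crClass_eq_pair h2 hu huv, Set.Subset.antisymm ?_ ?_⟩
  · intro x hx
    have hx' : x ∈ ({v, u} : Set V) := crClass_eq_pair h2 hu huv ▸ crClass_mono i.le_succ v hx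
    rcases hx' with rfl | rfl
    · rfl
    · exact absurd hx hsep
  · exact Set.singleton_subset_iff.2 (mem_crClass_self G (i + 1) v)

end ColourRefinement

section Counting

variable (G : SimpleGraph V) [Fintype V]

open scoped Classical in
noncomputable def crClasses (i : ℕ) : Finset (Set V) :=
  univ.image (crClass G i)

open scoped Classical in
noncomputable def splitClasses (i : ℕ) : Finset (Set V) :=
  {C ∈ crClasses G i | C ∉ crPartition G (i + 1)}

variable {G} {i : ℕ}

theorem mem_crClasses {C : Set V} : C ∈ crClasses G i ↔ C ∈ crPartition G i := by
  simp [crClasses, crPartition, eq_comm]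

theorem mem_splitClasses {C : Set V} :
    C ∈ splitClasses G i ↔ C ∈ crPartition G i ∧ C ∉ crPartition G (i + 1) := by
  simp [splitClasses, mem_crClasses]

variable (G i)

theorem card_crClasses_le : #(crClasses G i) ≤ Fintype.card V :=
  card_image_le.trans_eq card_univ

theorem crClasses_nonempty [Nonempty V] : (crClasses G i).Nonempty :=
  univ_nonempty.image _

theorem card_crClasses_add_card_splitClasses_le :
    #(crClasses G i) + #(splitClasses G i) ≤ #(crClasses G (i + 1)) := by
  classical
  let parent : Set V → Set V := fun D => {u | ∃ x ∈ D, crRel G i u x}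
  have hparent : ∀ v, parent (crClass G (i + 1) v) = crClass G i v := fun v =>
    Set.ext fun _ => ⟨fun ⟨_, hx, hux⟩ => crRel_trans hux hx.1,
      fun h => ⟨v, mem_crClass_self G (i + 1) v, h⟩⟩
  have himage : crClasses G i = (crClasses G (i + 1)).image parent := by
    simp only [crClasses, image_image, Function.comp_def, hparent]
  rw [himage]
  refine card_image_add_card_le_card parent fun C hC => ?_
  obtain ⟨⟨v, rfl⟩, hsplit⟩ := mem_splitClasses.1 hC
  obtain ⟨u, hu, hsep⟩ := exists_not_crRel_succ hsplit
  have hne : crClass G (i + 1) v ≠ crClass G (i + 1) u := fun h =>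
    hsep (show u ∈ crClass G (i + 1) v from h ▸ mem_crClass_self G (i + 1) u)
  exact ⟨_, mem_crClasses.2 ⟨v, rfl⟩, _, mem_crClasses.2 ⟨u, rfl⟩, hne, hparent v,
    by rw [hparent, crClass_eq_of_crRel hu]⟩

variable {G i}

theorem splitClasses_nonempty (h : crPartition G (i + 1) ≠ crPartition G i) :
    (splitClasses G i).Nonempty := by
  by_contra hempty
  have hstable : ∀ v, crClass G (i + 1) v = crClass G i v := fun v =>
    crClass_succ_eq_of_mem (not_not.1 fun hv => hempty ⟨_, mem_splitClasses.2 ⟨⟨v, rfl⟩, hv⟩⟩)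
  exact h (by simp only [crPartition, hstable])

theorem IsLongRefinement.card_crClasses [Nonempty V] (h : IsLongRefinement G) (k : ℕ) :
    #(crClasses G k) = min (k + 1) (Fintype.card V) :=
  eq_min_succ_of_lt_succ (crClasses_nonempty G 0).card_pos
    (fun k => le_self_add.trans (card_crClasses_add_card_splitClasses_le G k))
    (fun k hk => Nat.lt_of_lt_of_le
      (Nat.lt_add_of_pos_right (splitClasses_nonempty (h.1 k (by omega))).card_pos)
      (card_crClasses_add_card_splitClasses_le G k))
    (card_crClasses_le G) k

theorem IsLongRefinement.card_splitClasses_le_one [Nonempty V] (h : IsLongRefinement G) :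
    #(splitClasses G i) ≤ 1 := by
  have := card_crClasses_add_card_splitClasses_le G i
  rw [h.card_crClasses, h.card_crClasses] at this
  omega

theorem IsLongRefinement.eq_of_split (h : IsLongRefinement G) {C D : Set V}
    (hC : C ∈ crPartition G i) (hC' : C ∉ crPartition G (i + 1))
    (hD : D ∈ crPartition G i) (hD' : D ∉ crPartition G (i + 1)) : C = D := by
  have : Nonempty V := let ⟨v, _⟩ := hC; ⟨v⟩
  exact card_le_one.1 h.card_splitClasses_le_one C (mem_splitClasses.2 ⟨hC, hC'⟩) D
    (mem_splitClasses.2 ⟨hD, hD'⟩)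

end Counting

theorem consecutive_pairs_matching_general [Fintype V] (G : SimpleGraph V)
    (h : IsLongRefinement G) (p : ℕ)
    (hp : ∀ C ∈ crPartition G p, C.ncard ≤ 2)
    (j : ℕ) (hj : p ≤ j) (P Q : Set V)
    (hP : P ∈ crPartition G j) (hP' : P ∉ crPartition G (j+1))
    (hQ : Q ∈ crPartition G (j+1)) (hQ' : Q ∉ crPartition G (j+2)) :
    degOn G Q P 1 ∧ degOn G P Q 1 := by
  have hsmall : ∀ i ≥ p, ∀ v, (crClass G i v).ncard ≤ 2 := fun i hi v =>
    (Set.ncard_le_ncard (crClass_mono hi v)).trans (hp _ ⟨v, rfl⟩)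
  obtain ⟨u, rfl⟩ := hQ
  obtain ⟨d, hd, hsep⟩ := exists_not_crRel_succ hQ'
  have hdu : d ≠ u := by rintro rfl; exact hsep (crRel_refl G _ d)
  obtain ⟨w, hw⟩ :
      ∃ w, nbrCount G (crClass G (j + 1) w) d ≠ nbrCount G (crClass G (j + 1) w) u := by
    by_contra! hall
    exact hsep (crRel_succ_iff.2 ⟨hd, hall⟩)
  have hwP : crClass G j w = P := by
    refine h.eq_of_split ⟨w, rfl⟩ (fun hmem => hw ?_) hP hP'
    rw [crClass_succ_eq_of_mem hmem]
    exact (crRel_succ_iff.1 hd).2 w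
  obtain ⟨b, hbw, hpair, hsingle⟩ :=
    exists_crClass_eq_pair_of_split (hsmall j hj w) (hwP ▸ hP')
  rw [← hwP, hpair, crClass_eq_pair (hsmall (j + 1) (by omega) u) hd hdu]
  refine degOn_pair_pair_eq_one hbw.symm hdu.symm ?_ ?_
  · rw [← hpair]
    exact ((crRel_succ_iff.1 hd).2 w).symm
  · rw [← hsingle]
    exact hw.symm

/-- Consecutive pairs in the splitting order are joined by a perfect matching:
if the pair `P` splits in iteration `j+1` and the pair `Q` splits in iteration
`j+2` (with `j ≥ p`), then `deg_P(Q) = deg_Q(P) = 1`. -/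
theorem consecutive_pairs_matching [Fintype V] (G : SimpleGraph V)
    (h : IsLongRefinement G) (p : ℕ)
    (hp : ∀ C ∈ crPartition G p, C.ncard ≤ 2)
    (hpmin : ∀ q < p, ∃ C ∈ crPartition G q, 2 < C.ncard)
    (j : ℕ) (hj : p ≤ j) (P Q : Set V)
    (hP : P ∈ crPartition G j) (hP' : P ∉ crPartition G (j+1))
    (hQ : Q ∈ crPartition G (j+1)) (hQ' : Q ∉ crPartition G (j+2)) :
    degOn G Q P 1 ∧ degOn G P Q 1 :=
  consecutive_pairs_matching_general G h p hp j hj P Q hP hP' hQ hQ'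
end
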